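/- arXiv:2310.11127 — 4 statements merged into one kernel-verified Lean document; each statement's English description precedes it below -/
import Mathlib

section
/- Let κ > 0, k ∈ ℝ³ with |k| = κ, θ ∈ 𝕊², and let a : (0,∞) → ℂ satisfy a(s) = e^{i(κs - s k·θ)} f + e^{-i(κs - s k·θ)} \overline{f} + O(s^{-1}) as s → +∞ for some complex number f. Fix τ > 0 with sin(τ(k·θ - κ)) ≠ 0, and set D = 2i sin(τ(k·θ - κ)). Then f = lim_{s→+∞} D^{-1} ( e^{i((s+τ)k·θ - κ(s+τ))} a(s) - e^{i(s k·θ - κ s)} a(s+τ) ). In particular, f is uniquely determined by a. -/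
open scoped InnerProductSpace
open Asymptotics Filter Complex

/-- If `a : (0,∞) → ℂ` satisfies
`a s = e^{i(κs - s k·θ)} f + e^{-i(κs - s k·θ)} conj f + O(s⁻¹)` as `s → +∞`,
and `τ > 0` with `sin (τ (k·θ - κ)) ≠ 0`, `D = 2i sin (τ (k·θ - κ))`, then
`f = lim_{s→∞} D⁻¹ (e^{i((s+τ)k·θ - κ(s+τ))} a(s) - e^{i(s k·θ - κ s)} a(s+τ))`. -/
theorem stmt1 (κ : ℝ) (hκ : 0 < κ) (k θ : EuclideanSpace ℝ (Fin 3))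
    (hk : ‖k‖ = κ) (hθ : ‖θ‖ = 1) (f : ℂ) (a : ℝ → ℂ)
    (ha : (fun s : ℝ => a s -
        (Complex.exp (Complex.I * ((κ * s - s * (inner ℝ k θ : ℝ) : ℝ) : ℂ)) * f
          + Complex.exp (-(Complex.I * ((κ * s - s * (inner ℝ k θ : ℝ) : ℝ) : ℂ))) *
              (starRingEnd ℂ) f)) =O[atTop] fun s : ℝ => s⁻¹)
    (τ : ℝ) (hτ : 0 < τ) (hsin : Real.sin (τ * ((inner ℝ k θ : ℝ) - κ)) ≠ 0) :
    Filter.Tendsto (fun s : ℝ =>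
      (2 * Complex.I * ((Real.sin (τ * ((inner ℝ k θ : ℝ) - κ)) : ℝ) : ℂ))⁻¹ *
        (Complex.exp (Complex.I * (((s + τ) * (inner ℝ k θ : ℝ) - κ * (s + τ) : ℝ) : ℂ)) * a s
          - Complex.exp (Complex.I * ((s * (inner ℝ k θ : ℝ) - κ * s : ℝ) : ℂ)) * a (s + τ)))
      atTop (nhds f) := by
  set p : ℝ := (inner ℝ k θ : ℝ) with hp
  set D : ℂ := 2 * Complex.I * ((Real.sin (τ * (p - κ)) : ℝ) : ℂ) with hD
  have hDne : D ≠ 0 := by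
    refine mul_ne_zero (by simp [Complex.I_ne_zero]) (Complex.ofReal_ne_zero.mpr hsin)
  set M : ℝ → ℂ := fun s =>
      Complex.exp (Complex.I * ((κ * s - s * p : ℝ) : ℂ)) * f
        + Complex.exp (-(Complex.I * ((κ * s - s * p : ℝ) : ℂ))) * (starRingEnd ℂ) f with hM
  set g : ℝ → ℂ := fun s => a s - M s with hg
  have hgz : Tendsto g atTop (nhds 0) := ha.trans_tendsto tendsto_inv_atTop_zero
  have hgz2 : Tendsto (fun s => g (s + τ)) atTop (nhds 0) :=
    hgz.comp (tendsto_atTop_add_const_right _ τ tendsto_id)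
  have hE1 : ∀ s : ℝ, ‖Complex.exp (Complex.I * (((s + τ) * p - κ * (s + τ) : ℝ) : ℂ))‖ = 1 := by
    intro s; rw [Complex.norm_exp]; simp
  have hE2 : ∀ s : ℝ, ‖Complex.exp (Complex.I * ((s * p - κ * s : ℝ) : ℂ))‖ = 1 := by
    intro s; rw [Complex.norm_exp]; simp
  have h1 : Tendsto (fun s : ℝ =>
      Complex.exp (Complex.I * (((s + τ) * p - κ * (s + τ) : ℝ) : ℂ)) * g s) atTop (nhds 0) := by
    refine squeeze_zero_norm (fun s => ?_) (by simpa using hgz.norm)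
    rw [norm_mul, hE1 s, one_mul]
  have h2 : Tendsto (fun s : ℝ =>
      Complex.exp (Complex.I * ((s * p - κ * s : ℝ) : ℂ)) * g (s + τ)) atTop (nhds 0) := by
    refine squeeze_zero_norm (fun s => ?_) (by simpa using hgz2.norm)
    rw [norm_mul, hE2 s, one_mul]
  have key : ∀ s : ℝ,
      D⁻¹ * (Complex.exp (Complex.I * (((s + τ) * p - κ * (s + τ) : ℝ) : ℂ)) * a s
        - Complex.exp (Complex.I * ((s * p - κ * s : ℝ) : ℂ)) * a (s + τ))
      = f + D⁻¹ * (Complex.exp (Complex.I * (((s + τ) * p - κ * (s + τ) : ℝ) : ℂ)) * g s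
        - Complex.exp (Complex.I * ((s * p - κ * s : ℝ) : ℂ)) * g (s + τ)) := by
    intro s
    have hDval : D = Complex.exp (Complex.I * ((τ * (p - κ) : ℝ) : ℂ))
        - Complex.exp (-(Complex.I * ((τ * (p - κ) : ℝ) : ℂ))) := by
      rw [hD, Complex.ofReal_sin]
      rw [Complex.sin]
      push_cast
      ring_nf
      rw [Complex.I_sq]
      ring
    have hMid : Complex.exp (Complex.I * (((s + τ) * p - κ * (s + τ) : ℝ) : ℂ)) * M s
        - Complex.exp (Complex.I * ((s * p - κ * s : ℝ) : ℂ)) * M (s + τ) = D * f := by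
      rw [hDval, hM]
      simp only [mul_add, ← mul_assoc, ← Complex.exp_add]
      push_cast
      ring_nf
    have has : a s = M s + g s := by simp [hg]
    have hast : a (s + τ) = M (s + τ) + g (s + τ) := by simp [hg]
    rw [has, hast,
      show Complex.exp (Complex.I * (((s + τ) * p - κ * (s + τ) : ℝ) : ℂ)) * (M s + g s)
        - Complex.exp (Complex.I * ((s * p - κ * s : ℝ) : ℂ)) * (M (s + τ) + g (s + τ))
        = (Complex.exp (Complex.I * (((s + τ) * p - κ * (s + τ) : ℝ) : ℂ)) * M s
            - Complex.exp (Complex.I * ((s * p - κ * s : ℝ) : ℂ)) * M (s + τ))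
          + (Complex.exp (Complex.I * (((s + τ) * p - κ * (s + τ) : ℝ) : ℂ)) * g s
            - Complex.exp (Complex.I * ((s * p - κ * s : ℝ) : ℂ)) * g (s + τ)) from by ring,
      hMid, mul_add, inv_mul_cancel_left₀ hDne]
  have : Tendsto (fun s : ℝ => f + D⁻¹ *
      (Complex.exp (Complex.I * (((s + τ) * p - κ * (s + τ) : ℝ) : ℂ)) * g s
        - Complex.exp (Complex.I * ((s * p - κ * s : ℝ) : ℂ)) * g (s + τ))) atTop (nhds f) := by
    have := tendsto_const_nhds (x := f) (f := atTop (α := ℝ)) |>.add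
      (((h1.sub h2).const_mul D⁻¹))
    simpa using this
  exact this.congr (fun s => (key s).symm)
end

section
/- Let κ > 0, k ∈ ℝ³ with |k| = κ, θ ∈ 𝕊² with θ ≠ k/|k|, and let (f_j)_{j≥1}, (g_j)_{j≥1} be two sequences of complex numbers such that both series ψ(s) = e^{is k·θ} + (e^{iκs}/s) Σ_{j≥1} f_j s^{-(j-1)} and φ(s) = e^{is k·θ} + (e^{iκs}/s) Σ_{j≥1} g_j s^{-(j-1)} converge absolutely for s > r. If |ψ(s)|² = |φ(s)|² for all s > r, then f_j = g_j for all j ≥ 1. -/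
open scoped InnerProductSpace

lemma summable_norm_div_pow (c : ℕ → ℂ) (s0 s : ℝ) (hs0 : 0 < s0) (hss : s0 ≤ s)
    (h : Summable fun j : ℕ => ‖c j‖ / s0 ^ j) :
    Summable fun j : ℕ => ‖c j / (s : ℂ) ^ j‖ := by
  have hs : 0 < s := hs0.trans_le hss
  have hnorm : ∀ j : ℕ, ‖c j / (s : ℂ) ^ j‖ = ‖c j‖ / s ^ j := by
    intro j
    rw [norm_div, norm_pow, Complex.norm_real, Real.norm_of_nonneg hs.le]
  refine Summable.of_nonneg_of_le (fun j => norm_nonneg _) (fun j => ?_) h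
  rw [hnorm j]
  gcongr

lemma tail_bound (c : ℕ → ℂ) (s0 s : ℝ) (hs0 : 0 < s0) (hss : s0 ≤ s)
    (h : Summable fun j : ℕ => ‖c j‖ / s0 ^ j) (n : ℕ)
    (hc : ∀ j, j < n → c j = 0) :
    ‖∑' j : ℕ, c j / (s : ℂ) ^ j‖ ≤ s0 ^ n * (∑' j : ℕ, ‖c j‖ / s0 ^ j) / s ^ n := by
  have hs : 0 < s := hs0.trans_le hss
  have hsn := summable_norm_div_pow c s0 s hs0 hss h
  have h1 : ‖∑' j : ℕ, c j / (s : ℂ) ^ j‖ ≤ ∑' j : ℕ, ‖c j / (s : ℂ) ^ j‖ :=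
    norm_tsum_le_tsum_norm hsn
  have h2 : ∑' j : ℕ, ‖c j / (s : ℂ) ^ j‖ ≤ ∑' j : ℕ, s0 ^ n / s ^ n * (‖c j‖ / s0 ^ j) := by
    refine Summable.tsum_le_tsum (fun j => ?_) hsn (h.mul_left _)
    rw [norm_div, norm_pow, Complex.norm_real, Real.norm_of_nonneg hs.le]
    rcases lt_or_ge j n with hj | hj
    · simp [hc j hj]
    · obtain ⟨m, rfl⟩ := Nat.exists_eq_add_of_le hj
      have heq : s0 ^ n / s ^ n * (‖c (n+m)‖ / s0 ^ (n+m)) = ‖c (n+m)‖ / (s ^ n * s0 ^ m) := by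
        rw [pow_add]; field_simp
      rw [heq, pow_add]
      gcongr
  calc ‖∑' j : ℕ, c j / (s : ℂ) ^ j‖ ≤ ∑' j : ℕ, s0 ^ n / s ^ n * (‖c j‖ / s0 ^ j) := h1.trans h2
    _ = s0 ^ n * (∑' j : ℕ, ‖c j‖ / s0 ^ j) / s ^ n := by rw [tsum_mul_left]; ring

set_option maxHeartbeats 1000000 in
open Complex in
lemma stmt5_aux (κ r : ℝ) (hκ : 0 < κ) (hr : 0 < r)
    (k θ : EuclideanSpace ℝ (Fin 3)) (hk : ‖k‖ = κ) (hθ : ‖θ‖ = 1)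
    (hne : θ ≠ ‖k‖⁻¹ • k) (f g : ℕ → ℂ)
    (hconvf : ∀ s : ℝ, r < s → Summable fun j : ℕ => ‖f j‖ / s ^ j)
    (hconvg : ∀ s : ℝ, r < s → Summable fun j : ℕ => ‖g j‖ / s ^ j)
    (hint : ∀ s : ℝ, r < s →
      ‖Complex.exp (Complex.I * ((s * (inner ℝ k θ : ℝ) : ℝ) : ℂ)) +
          (Complex.exp (Complex.I * (κ : ℂ) * (s : ℂ)) / (s : ℂ)) *
            ∑' j : ℕ, f j / (s : ℂ) ^ j‖ ^ 2
        = ‖Complex.exp (Complex.I * ((s * (inner ℝ k θ : ℝ) : ℝ) : ℂ)) +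
            (Complex.exp (Complex.I * (κ : ℂ) * (s : ℂ)) / (s : ℂ)) *
              ∑' j : ℕ, g j / (s : ℂ) ^ j‖ ^ 2)
    (n : ℕ) (ihn : ∀ j : ℕ, j < n → f j = g j) : f n = g n := by
  classical
  -- basic geometry: inner k θ < κ
  set t : ℝ := (inner ℝ k θ : ℝ) with ht
  have htle : t ≤ κ := by
    have h1 := real_inner_le_norm k θ
    rw [hk, hθ, mul_one] at h1
    exact h1
  have htlt : t < κ := by
    rcases lt_or_eq_of_le htle with h | h
    · exact h
    · exfalso
      have h' : ⟪k, θ⟫_ℝ = ‖k‖ * ‖θ‖ := by rw [hk, hθ, mul_one]; exact h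
      have h2 := (inner_eq_norm_mul_iff_real).mp h'
      rw [hθ, one_smul] at h2
      apply hne
      rw [hk] at h2
      rw [hk, h2, smul_smul, inv_mul_cancel₀ (ne_of_gt hκ), one_smul]
  set β : ℝ := κ - t with hβdef
  have hβ : 0 < β := sub_pos.mpr htlt
  -- set-up
  set s0 : ℝ := max (r + 1) 1 with hs0def
  have hs0r : r < s0 := lt_of_lt_of_le (lt_add_one r) (le_max_left _ _)
  have hs01 : (1:ℝ) ≤ s0 := le_max_right _ _
  have hs0pos : (0:ℝ) < s0 := lt_of_lt_of_le one_pos hs01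
  have hf0 : Summable fun j : ℕ => ‖f j‖ / s0 ^ j := hconvf s0 hs0r
  have hg0 : Summable fun j : ℕ => ‖g j‖ / s0 ^ j := hconvg s0 hs0r
  set d : ℕ → ℂ := fun j => f j - g j with hddef
  set e : ℕ → ℂ := fun j => if j ≤ n then 0 else f j - g j with hedef
  have hd0 : Summable fun j : ℕ => ‖d j‖ / s0 ^ j := by
    refine Summable.of_nonneg_of_le (fun j => by positivity) (fun j => ?_) (hf0.add hg0)
    have : ‖d j‖ ≤ ‖f j‖ + ‖g j‖ := norm_sub_le _ _
    rw [← add_div]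
    gcongr
  have he0 : Summable fun j : ℕ => ‖e j‖ / s0 ^ j := by
    refine Summable.of_nonneg_of_le (fun j => by positivity) (fun j => ?_) hd0
    have : ‖e j‖ ≤ ‖d j‖ := by
      simp only [hedef]
      split
      · simp
      · exact le_refl _
    gcongr
  set Mf : ℝ := ∑' j : ℕ, ‖f j‖ / s0 ^ j with hMf
  set Mg : ℝ := ∑' j : ℕ, ‖g j‖ / s0 ^ j with hMg
  set Md : ℝ := ∑' j : ℕ, ‖d j‖ / s0 ^ j with hMd
  set Me : ℝ := ∑' j : ℕ, ‖e j‖ / s0 ^ j with hMe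
  have hMf0 : 0 ≤ Mf := tsum_nonneg (fun j => by positivity)
  have hMg0 : 0 ≤ Mg := tsum_nonneg (fun j => by positivity)
  have hMd0 : 0 ≤ Md := tsum_nonneg (fun j => by positivity)
  have hMe0 : 0 ≤ Me := tsum_nonneg (fun j => by positivity)
  set c : ℂ := f n - g n with hcdef
  set K : ℝ := s0 ^ n * Md * (Mf + Mg) + 2 * (s0 ^ (n+1) * Me) with hKdef
  have hK0 : 0 ≤ K := by positivity
  -- the central estimate
  have est : ∀ s : ℝ, s0 ≤ s →
      2 * |(Complex.exp (-(Complex.I * (β:ℂ) * (s:ℂ))) * (starRingEnd ℂ) c).re| ≤ K / s := by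
    intro s hs
    have hrs : r < s := lt_of_lt_of_le hs0r hs
    have hs1 : (1:ℝ) ≤ s := le_trans hs01 hs
    have hspos : (0:ℝ) < s := lt_of_lt_of_le hs0pos hs
    have hsne : (s:ℂ) ≠ 0 := Complex.ofReal_ne_zero.mpr (ne_of_gt hspos)
    -- summabilities at s
    have hfs : Summable fun j : ℕ => f j / (s:ℂ) ^ j :=
      Summable.of_norm (summable_norm_div_pow f s0 s hs0pos hs hf0)
    have hgs : Summable fun j : ℕ => g j / (s:ℂ) ^ j :=
      Summable.of_norm (summable_norm_div_pow g s0 s hs0pos hs hg0)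
    have hes : Summable fun j : ℕ => e j / (s:ℂ) ^ j :=
      Summable.of_norm (summable_norm_div_pow e s0 s hs0pos hs he0)
    set F : ℂ := ∑' j : ℕ, f j / (s:ℂ) ^ j with hF
    set G : ℂ := ∑' j : ℕ, g j / (s:ℂ) ^ j with hG
    set Rem : ℂ := ∑' j : ℕ, e j / (s:ℂ) ^ j with hRem
    -- norm bounds
    have hFnorm : ‖F‖ ≤ Mf := by
      have := tail_bound f s0 s hs0pos hs hf0 0 (fun j hj => absurd hj (Nat.not_lt_zero j))
      simpa using this
    have hGnorm : ‖G‖ ≤ Mg := by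
      have := tail_bound g s0 s hs0pos hs hg0 0 (fun j hj => absurd hj (Nat.not_lt_zero j))
      simpa using this
    have hDnorm : ‖F - G‖ ≤ s0 ^ n * Md / s ^ n := by
      have h1 : F - G = ∑' j : ℕ, d j / (s:ℂ) ^ j := by
        rw [hF, hG, ← Summable.tsum_sub hfs hgs]
        congr 1 with j
        rw [hddef, sub_div]
      rw [h1]
      exact tail_bound d s0 s hs0pos hs hd0 n (fun j hj => by
        simp only [hddef]; rw [sub_eq_zero]; exact ihn j hj)
    have hRemnorm : ‖Rem‖ ≤ s0 ^ (n+1) * Me / s ^ (n+1) := by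
      exact tail_bound e s0 s hs0pos hs he0 (n+1) (fun j hj => by
        simp only [hedef]
        rw [if_pos (Nat.lt_succ_iff.mp hj)])
    -- splitting: F - G = c / s^n + Rem
    have hsplit : F - G = (c : ℂ) / (s:ℂ) ^ n + Rem := by
      have h1 : F - G = ∑' j : ℕ, d j / (s:ℂ) ^ j := by
        rw [hF, hG, ← Summable.tsum_sub hfs hgs]
        congr 1 with j
        rw [hddef, sub_div]
      rw [h1, hRem]
      have h2 : (fun j : ℕ => d j / (s:ℂ) ^ j)
          = fun j : ℕ => (if j = n then c / (s:ℂ) ^ n else 0) + e j / (s:ℂ) ^ j := by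
        funext j
        rcases lt_trichotomy j n with hj | hj | hj
        · rw [if_neg (ne_of_lt hj)]
          simp only [hddef, hedef, if_pos hj.le]
          rw [sub_eq_zero.mpr (ihn j hj)]
          simp
        · subst hj
          rw [if_pos rfl]
          simp only [hddef, hedef, if_pos (le_refl j), hcdef]
          simp
        · rw [if_neg (ne_of_gt hj)]
          simp only [hddef, hedef, if_neg (not_le.mpr hj)]
          simp
      rw [h2, Summable.tsum_add ⟨_, hasSum_ite_eq n (c / (s:ℂ) ^ n)⟩ hes, tsum_ite_eq]
    -- the key identity from the intensity equation
    have halg : 2 * (Complex.exp (-(Complex.I * (β:ℂ) * (s:ℂ))) * (starRingEnd ℂ) (F - G)).re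
        = (‖G‖ ^ 2 - ‖F‖ ^ 2) / s := by
      have h := hint s hrs
      rw [← hF, ← hG] at h
      have hsq : ∀ z : ℂ, ‖z‖ ^ 2 = Complex.normSq z := fun z => by
        rw [Complex.sq_norm]
      set A : ℂ := Complex.exp (Complex.I * ((s * t : ℝ) : ℂ)) with hA
      set Eκ : ℂ := Complex.exp (Complex.I * (κ:ℂ) * (s:ℂ)) with hEκ
      have hAE : A * (starRingEnd ℂ) Eκ = Complex.exp (-(Complex.I * (β:ℂ) * (s:ℂ))) := by
        rw [hA, hEκ, ← Complex.exp_conj, ← Complex.exp_add]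
        congr 1
        rw [map_mul, map_mul, Complex.conj_I, Complex.conj_ofReal, Complex.conj_ofReal, hβdef]
        push_cast
        ring
      have hconjmul : ∀ Z : ℂ, A * (starRingEnd ℂ) (Eκ / (s:ℂ) * Z)
          = Complex.exp (-(Complex.I * (β:ℂ) * (s:ℂ))) * (starRingEnd ℂ) Z / (s:ℂ) := by
        intro Z
        rw [map_mul, map_div₀, Complex.conj_ofReal, ← hAE]
        ring
      have hnsq : ∀ Z : ℂ, Complex.normSq (Eκ / (s:ℂ) * Z) = ‖Z‖ ^ 2 / s ^ 2 := by
        intro Z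
        rw [Complex.normSq_mul, Complex.normSq_div, Complex.normSq_ofReal, hsq]
        have hEone : Complex.normSq Eκ = 1 := by
          rw [Complex.normSq_eq_norm_sq, hEκ, Complex.norm_exp]
          simp
        rw [hEone]
        ring
      rw [hsq, hsq, Complex.normSq_add, Complex.normSq_add, hconjmul, hconjmul,
        hnsq, hnsq] at h
      rw [Complex.div_ofReal_re, Complex.div_ofReal_re] at h
      rw [map_sub, mul_sub, Complex.sub_re]
      have hs2 : s ^ 2 ≠ 0 := by positivity
      field_simp at h ⊢
      apply mul_left_cancel₀ (ne_of_gt hspos)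
      linear_combination s * h
    -- now combine
    have hre : (Complex.exp (-(Complex.I * (β:ℂ) * (s:ℂ))) * (starRingEnd ℂ) (F - G)).re
        = (Complex.exp (-(Complex.I * (β:ℂ) * (s:ℂ))) * (starRingEnd ℂ) c).re / s ^ n
          + (Complex.exp (-(Complex.I * (β:ℂ) * (s:ℂ))) * (starRingEnd ℂ) Rem).re := by
      rw [hsplit, map_add, mul_add, Complex.add_re]
      congr 1
      rw [map_div₀, map_pow, Complex.conj_ofReal, ← mul_div_assoc, ← Complex.ofReal_pow,
        Complex.div_ofReal_re]
    -- |exp(-iβs)| = 1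
    have hexp1 : ‖Complex.exp (-(Complex.I * (β:ℂ) * (s:ℂ)))‖ = 1 := by
      rw [Complex.norm_exp]
      simp
    have hRemre : |(Complex.exp (-(Complex.I * (β:ℂ) * (s:ℂ))) * (starRingEnd ℂ) Rem).re|
        ≤ s0 ^ (n+1) * Me / s ^ (n+1) := by
      calc |(Complex.exp (-(Complex.I * (β:ℂ) * (s:ℂ))) * (starRingEnd ℂ) Rem).re|
          ≤ ‖Complex.exp (-(Complex.I * (β:ℂ) * (s:ℂ))) * (starRingEnd ℂ) Rem‖ :=
            Complex.abs_re_le_norm _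
        _ = ‖Rem‖ := by rw [norm_mul, hexp1, one_mul, RCLike.norm_conj]
        _ ≤ _ := hRemnorm
    have hFG2 : |‖G‖ ^ 2 - ‖F‖ ^ 2| ≤ (s0 ^ n * Md / s ^ n) * (Mf + Mg) := by
      have h1 : ‖G‖ ^ 2 - ‖F‖ ^ 2 = (‖G‖ - ‖F‖) * (‖G‖ + ‖F‖) := by ring
      rw [h1, abs_mul]
      have h2 : |‖G‖ - ‖F‖| ≤ ‖F - G‖ := by
        rw [← norm_sub_rev]
        exact abs_norm_sub_norm_le G F
      have h3 : |‖G‖ + ‖F‖| ≤ Mf + Mg := by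
        rw [_root_.abs_of_nonneg (by positivity)]
        linarith
      calc |‖G‖ - ‖F‖| * |‖G‖ + ‖F‖| ≤ ‖F - G‖ * (Mf + Mg) := by
            apply mul_le_mul h2 h3 (abs_nonneg _) (norm_nonneg _)
        _ ≤ (s0 ^ n * Md / s ^ n) * (Mf + Mg) := by
            apply mul_le_mul_of_nonneg_right hDnorm (by linarith)
    -- assemble: from halg and hre
    have key : 2 * (Complex.exp (-(Complex.I * (β:ℂ) * (s:ℂ))) * (starRingEnd ℂ) c).re / s ^ n
        = (‖G‖ ^ 2 - ‖F‖ ^ 2) / s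
          - 2 * (Complex.exp (-(Complex.I * (β:ℂ) * (s:ℂ))) * (starRingEnd ℂ) Rem).re := by
      rw [← halg, hre]
      ring
    have habs : 2 * |(Complex.exp (-(Complex.I * (β:ℂ) * (s:ℂ))) * (starRingEnd ℂ) c).re| / s ^ n
        ≤ (s0 ^ n * Md / s ^ n) * (Mf + Mg) / s + 2 * (s0 ^ (n+1) * Me / s ^ (n+1)) := by
      have h1 : 2 * |(Complex.exp (-(Complex.I * (β:ℂ) * (s:ℂ))) * (starRingEnd ℂ) c).re| / s ^ n
          = |2 * (Complex.exp (-(Complex.I * (β:ℂ) * (s:ℂ))) * (starRingEnd ℂ) c).re / s ^ n| := by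
        rw [abs_div, abs_mul, _root_.abs_of_nonneg (by norm_num : (0:ℝ) ≤ 2),
          _root_.abs_of_nonneg (by positivity : (0:ℝ) ≤ s ^ n)]
      rw [h1, key]
      calc |(‖G‖ ^ 2 - ‖F‖ ^ 2) / s
            - 2 * (Complex.exp (-(Complex.I * (β:ℂ) * (s:ℂ))) * (starRingEnd ℂ) Rem).re|
          ≤ |(‖G‖ ^ 2 - ‖F‖ ^ 2) / s|
            + |2 * (Complex.exp (-(Complex.I * (β:ℂ) * (s:ℂ))) * (starRingEnd ℂ) Rem).re| :=
            abs_sub _ _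
        _ ≤ (s0 ^ n * Md / s ^ n) * (Mf + Mg) / s + 2 * (s0 ^ (n+1) * Me / s ^ (n+1)) := by
            apply add_le_add
            · rw [abs_div, _root_.abs_of_nonneg hspos.le]
              exact (div_le_div_iff_of_pos_right hspos).mpr hFG2
            · rw [abs_mul, _root_.abs_of_nonneg (by norm_num : (0:ℝ) ≤ 2)]
              linarith [hRemre]
    -- multiply habs through by s^n
    have hKform : (s0 ^ n * Md / s ^ n) * (Mf + Mg) / s + 2 * (s0 ^ (n+1) * Me / s ^ (n+1))
        = K / s / s ^ n := by
      rw [hKdef]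
      have hsn : (s:ℝ) ^ n ≠ 0 := by positivity
      field_simp
      ring
    rw [hKform] at habs
    have hsn0 : (0:ℝ) < s ^ n := by positivity
    calc 2 * |(Complex.exp (-(Complex.I * (β:ℂ) * (s:ℂ))) * (starRingEnd ℂ) c).re|
        = 2 * |(Complex.exp (-(Complex.I * (β:ℂ) * (s:ℂ))) * (starRingEnd ℂ) c).re| / s ^ n
            * s ^ n := by field_simp
      _ ≤ K / s / s ^ n * s ^ n := by
          exact mul_le_mul_of_nonneg_right habs hsn0.le
      _ = K / s := by field_simp
  -- conclude: c = 0
  rw [← sub_eq_zero, ← hcdef]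
  by_contra hc0
  have hcpos : 0 < ‖c‖ := norm_pos_iff.mpr hc0
  set φ : ℝ := Complex.arg ((starRingEnd ℂ) c) with hφdef
  have hφlb : -Real.pi < φ := Complex.neg_pi_lt_arg _
  set S : ℝ := max s0 (K / ‖c‖) with hSdef
  obtain ⟨m, hm⟩ := exists_nat_gt ((β * S + Real.pi) / (2 * Real.pi))
  have hπ : (0:ℝ) < Real.pi := Real.pi_pos
  have hmlb : β * S + Real.pi < 2 * Real.pi * m := by
    rw [div_lt_iff₀ (by positivity)] at hm
    linarith
  set sm : ℝ := (φ + 2 * Real.pi * m) / β with hsmdef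
  have hsmS : S < sm := by
    rw [hsmdef, lt_div_iff₀ hβ]
    linarith
  have hs0S : s0 ≤ S := le_max_left _ _
  have hsms0 : s0 ≤ sm := le_of_lt (lt_of_le_of_lt hs0S hsmS)
  have hsmpos : 0 < sm := lt_of_lt_of_le hs0pos hsms0
  have hsm_eq : β * sm = φ + 2 * Real.pi * m := by
    rw [hsmdef]
    field_simp
  -- the rotated phase is real and positive at sm
  have hval : Complex.exp (-(Complex.I * (β:ℂ) * (sm:ℂ))) * (starRingEnd ℂ) c
      = ((‖c‖ : ℝ) : ℂ) := by
    have hpolar : ((‖(starRingEnd ℂ) c‖ : ℝ) : ℂ)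
        * Complex.exp ((φ:ℂ) * Complex.I) = (starRingEnd ℂ) c :=
      Complex.norm_mul_exp_arg_mul_I _
    rw [← hpolar, RCLike.norm_conj]
    rw [show Complex.exp (-(Complex.I * (β:ℂ) * (sm:ℂ))) * (((‖c‖ : ℝ) : ℂ)
        * Complex.exp ((φ:ℂ) * Complex.I))
      = ((‖c‖ : ℝ) : ℂ) * (Complex.exp (-(Complex.I * (β:ℂ) * (sm:ℂ)))
        * Complex.exp ((φ:ℂ) * Complex.I)) from by ring]
    rw [← Complex.exp_add]
    have hC : ((β * sm : ℝ) : ℂ) = ((φ + 2 * Real.pi * m : ℝ) : ℂ) := by rw [hsm_eq]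
    push_cast at hC
    have harg : -(Complex.I * (β:ℂ) * (sm:ℂ)) + (φ:ℂ) * Complex.I
        = ((-(m:ℤ) : ℤ) : ℂ) * (2 * (Real.pi : ℂ) * Complex.I) := by
      push_cast
      linear_combination (-Complex.I) * hC
    rw [harg, Complex.exp_int_mul_two_pi_mul_I, mul_one]
  have hest := est sm hsms0
  rw [hval] at hest
  have hre : ((((‖c‖ : ℝ)) : ℂ)).re = ‖c‖ := Complex.ofReal_re _
  rw [hre, _root_.abs_of_nonneg (norm_nonneg c)] at hest
  -- contradiction
  have h1 : 2 * ‖c‖ * sm ≤ K := by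
    rw [← le_div_iff₀ hsmpos]
    exact hest
  have h2 : K / ‖c‖ < sm := lt_of_le_of_lt (le_max_right _ _) hsmS
  rw [div_lt_iff₀ hcpos] at h2
  nlinarith [mul_pos hcpos hsmpos]


/-- If `ψ s = e^{is k·θ} + (e^{iκs}/s) ∑_{j≥1} f_j s^{-(j-1)}` and
`φ s = e^{is k·θ} + (e^{iκs}/s) ∑_{j≥1} g_j s^{-(j-1)}` converge absolutely for `s > r`,
`θ ≠ k/|k|`, and `|ψ s|² = |φ s|²` for all `s > r`, then `f_j = g_j` for all `j`.
(Here `f j`, `g j` denote the mathematical coefficients `f_{j+1}`, `g_{j+1}`.) -/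
theorem stmt5 (κ r : ℝ) (hκ : 0 < κ) (hr : 0 < r)
    (k θ : EuclideanSpace ℝ (Fin 3)) (hk : ‖k‖ = κ) (hθ : ‖θ‖ = 1)
    (hne : θ ≠ ‖k‖⁻¹ • k) (f g : ℕ → ℂ)
    (hconvf : ∀ s : ℝ, r < s → Summable fun j : ℕ => ‖f j‖ / s ^ j)
    (hconvg : ∀ s : ℝ, r < s → Summable fun j : ℕ => ‖g j‖ / s ^ j)
    (hint : ∀ s : ℝ, r < s →
      ‖Complex.exp (Complex.I * ((s * (inner ℝ k θ : ℝ) : ℝ) : ℂ)) +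
          (Complex.exp (Complex.I * (κ : ℂ) * (s : ℂ)) / (s : ℂ)) *
            ∑' j : ℕ, f j / (s : ℂ) ^ j‖ ^ 2
        = ‖Complex.exp (Complex.I * ((s * (inner ℝ k θ : ℝ) : ℝ) : ℂ)) +
            (Complex.exp (Complex.I * (κ : ℂ) * (s : ℂ)) / (s : ℂ)) *
              ∑' j : ℕ, g j / (s : ℂ) ^ j‖ ^ 2) :
    ∀ j : ℕ, f j = g j := by
  intro j
  induction j using Nat.strong_induction_on with
  | _ j ih =>
    exact stmt5_aux κ r hκ hr k θ hk hθ hne f g hconvf hconvg hint j ih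
end

section
/- Let κ > 0, k ∈ ℝ³ with |k| = κ, θ ∈ 𝕊², n ≥ 1, and suppose |f_j| ≤ C ρ^j for all j with ρ < r. Define ψ₁(s) = (e^{iκs}/s) Σ_{j≥1} f_j s^{-(j-1)}, ψ_{1,n}(s) = (e^{iκs}/s) Σ_{j=1}^n f_j s^{-(j-1)}, a(s) = s(|e^{is k·θ} + ψ₁(s)|² - 1), a_n(s) = s(|e^{is k·θ} + ψ_{1,n}(s)|² - 1), and b_n(s) = s^n (a(s) - a_n(s)). Then b_n(s) = e^{i(κ - k·θ)s} f_{n+1} + e^{-i(κ - k·θ)s} \overline{f_{n+1}} + O(s^{-1}) as s → +∞. -/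
open scoped InnerProductSpace
open Asymptotics Filter

lemma tail_bound_s7 (C ρ : ℝ) (hρ : 0 < ρ) (hC : 0 ≤ C) (f : ℕ → ℂ)
    (hbound : ∀ j : ℕ, ‖f j‖ ≤ C * ρ ^ (j + 1)) (s : ℝ) (hs1 : 1 ≤ s) (hs2 : 2 * ρ ≤ s)
    (m : ℕ) :
    Summable (fun j : ℕ => f (j + m) / (s : ℂ) ^ j) ∧
      ‖∑' j : ℕ, f (j + m) / (s : ℂ) ^ j‖ ≤ 2 * C * ρ ^ (m + 1) := by
  have hs0 : (0:ℝ) < s := lt_of_lt_of_le one_pos hs1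
  have hterm : ∀ j : ℕ, ‖f (j + m) / (s : ℂ) ^ j‖ ≤ C * ρ ^ (m + 1) * (1/2) ^ j := by
    intro j
    rw [norm_div, norm_pow, Complex.norm_real, Real.norm_eq_abs, abs_of_pos hs0]
    have h1 : ‖f (j + m)‖ ≤ C * ρ ^ (j + m + 1) := hbound _
    have h2 : (ρ / s) ^ j ≤ (1/2) ^ j := by
      apply pow_le_pow_left₀ (by positivity)
      rw [div_le_div_iff₀ hs0 (by norm_num)]; linarith
    have h3 : C * ρ ^ (j + m + 1) / s ^ j = C * ρ ^ (m+1) * (ρ / s) ^ j := by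
      rw [div_pow]; field_simp; ring
    calc ‖f (j + m)‖ / s ^ j ≤ C * ρ ^ (j + m + 1) / s ^ j := by gcongr
      _ = C * ρ ^ (m+1) * (ρ / s) ^ j := h3
      _ ≤ C * ρ ^ (m+1) * (1/2) ^ j := by
          apply mul_le_mul_of_nonneg_left h2 (by positivity)
  have hgeo : HasSum (fun j : ℕ => C * ρ ^ (m + 1) * (1/2 : ℝ) ^ j) (C * ρ ^ (m+1) * 2) := by
    have := (hasSum_geometric_of_lt_one (by norm_num : (0:ℝ) ≤ 1/2) (by norm_num)).mul_left
      (C * ρ ^ (m + 1))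
    norm_num at this ⊢
    convert this using 2
  constructor
  · exact Summable.of_norm_bounded hgeo.summable hterm
  · have := tsum_of_norm_bounded hgeo hterm
    calc ‖∑' j : ℕ, f (j + m) / (s : ℂ) ^ j‖ ≤ C * ρ ^ (m+1) * 2 := this
      _ = 2 * C * ρ ^ (m+1) := by ring

set_option maxHeartbeats 1000000 in
/-- With `ψ₁ s = (e^{iκs}/s) ∑_{j≥1} f_j s^{-(j-1)}`, its `n`-term truncation
`ψ_{1,n}`, `a s = s(|e^{is k·θ} + ψ₁ s|² - 1)`, `a_n s = s(|e^{is k·θ} + ψ_{1,n} s|² - 1)`,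
and `b_n s = s^n (a s - a_n s)`, one has
`b_n s = e^{i(κ - k·θ)s} f_{n+1} + e^{-i(κ - k·θ)s} conj f_{n+1} + O(s⁻¹)` as `s → +∞`.
(Here `f j` denotes the mathematical coefficient `f_{j+1}`, so `f_{n+1} = f n`, the
truncation sums over `j ∈ Finset.range n`, and the bound reads `‖f j‖ ≤ C ρ^(j+1)`.) -/
theorem stmt7 (κ r ρ C : ℝ) (hκ : 0 < κ) (hρ : 0 < ρ) (hρr : ρ < r)
    (k θ : EuclideanSpace ℝ (Fin 3)) (hk : ‖k‖ = κ) (hθ : ‖θ‖ = 1)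
    (n : ℕ) (hn : 1 ≤ n)
    (f : ℕ → ℂ) (hbound : ∀ j : ℕ, ‖f j‖ ≤ C * ρ ^ (j + 1))
    (ψ₁ ψ₁ₙ : ℝ → ℂ)
    (hψ₁ : ∀ s : ℝ, r < s → ψ₁ s =
      (Complex.exp (Complex.I * (κ : ℂ) * (s : ℂ)) / (s : ℂ)) * ∑' j : ℕ, f j / (s : ℂ) ^ j)
    (hψ₁ₙ : ∀ s : ℝ, ψ₁ₙ s =
      (Complex.exp (Complex.I * (κ : ℂ) * (s : ℂ)) / (s : ℂ)) *
        ∑ j ∈ Finset.range n, f j / (s : ℂ) ^ j)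
    (a aₙ bₙ : ℝ → ℂ)
    (ha : ∀ s : ℝ, a s = (s : ℂ) *
      (((‖Complex.exp (Complex.I * ((s * (inner ℝ k θ : ℝ) : ℝ) : ℂ)) + ψ₁ s‖ ^ 2 : ℝ) : ℂ) - 1))
    (haₙ : ∀ s : ℝ, aₙ s = (s : ℂ) *
      (((‖Complex.exp (Complex.I * ((s * (inner ℝ k θ : ℝ) : ℝ) : ℂ)) + ψ₁ₙ s‖ ^ 2 : ℝ) : ℂ) - 1))
    (hbₙ : ∀ s : ℝ, bₙ s = (s : ℂ) ^ n * (a s - aₙ s)) :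
    (fun s : ℝ => bₙ s -
        (Complex.exp (Complex.I * (((κ - (inner ℝ k θ : ℝ)) * s : ℝ) : ℂ)) * f n
          + Complex.exp (-(Complex.I * (((κ - (inner ℝ k θ : ℝ)) * s : ℝ) : ℂ))) *
              (starRingEnd ℂ) (f n))) =O[atTop] fun s : ℝ => s⁻¹ := by
  have hC : 0 ≤ C := by
    have h0 := hbound 0
    have h1 := (norm_nonneg (f 0)).trans h0
    rw [pow_one] at h1
    nlinarith
  set p : ℝ := (inner ℝ k θ : ℝ) with hp
  rw [Asymptotics.isBigO_iff]
  refine ⟨8*C^2*ρ^(n+2) + 4*C*ρ^(n+2), ?_⟩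
  filter_upwards [eventually_ge_atTop (max (max (r+1) (2*ρ)) 1)] with s hs
  have hs1 : (1:ℝ) ≤ s := le_trans (le_max_right _ _) hs
  have hsr : r < s := by
    have : r + 1 ≤ s := le_trans (le_trans (le_max_left _ _) (le_max_left _ _)) hs
    linarith
  have hs2 : 2 * ρ ≤ s := le_trans (le_trans (le_max_right _ _) (le_max_left _ _)) hs
  have hs0 : (0:ℝ) < s := lt_of_lt_of_le one_pos hs1
  have hs_ne : s ≠ 0 := ne_of_gt hs0
  obtain ⟨hS0, hB0⟩ := tail_bound_s7 C ρ hρ hC f hbound s hs1 hs2 0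
  obtain ⟨hSn, hBn⟩ := tail_bound_s7 C ρ hρ hC f hbound s hs1 hs2 n
  obtain ⟨hSn1, hBn1⟩ := tail_bound_s7 C ρ hρ hC f hbound s hs1 hs2 (n+1)
  set c : ℂ := (s : ℂ) with hcdef
  have hc : c ≠ 0 := by
    simp only [hcdef, ne_eq, Complex.ofReal_eq_zero]; exact hs_ne
  set u : ℂ := Complex.exp (Complex.I * ((s * p : ℝ) : ℂ)) with hudef
  set w : ℂ := Complex.exp (Complex.I * (((κ - p) * s : ℝ) : ℂ)) with hwdef
  set E : ℂ := Complex.exp (Complex.I * (κ : ℂ) * (s : ℂ)) with hEdef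
  have hu_ne : u ≠ 0 := Complex.exp_ne_zero _
  have hcw : Complex.exp (-(Complex.I * (((κ - p) * s : ℝ) : ℂ))) = (starRingEnd ℂ) w := by
    rw [hwdef, ← Complex.exp_conj, map_mul, Complex.conj_I, Complex.conj_ofReal]
    congr 1; ring
  have hE : E = u * w := by
    rw [hudef, hwdef, hEdef, ← Complex.exp_add]
    congr 1
    push_cast
    ring
  have hconjc : (starRingEnd ℂ) c = c := by
    rw [hcdef, Complex.conj_ofReal]
  have hcu : (starRingEnd ℂ) u = u⁻¹ := by
    rw [hudef, ← Complex.exp_conj, map_mul, Complex.conj_I, Complex.conj_ofReal,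
      ← Complex.exp_neg]
    congr 1; ring
  have hnu : ‖u‖ = 1 := by
    rw [hudef, Complex.norm_exp]
    simp
  have hnw : ‖w‖ = 1 := by
    rw [hwdef, Complex.norm_exp]
    simp
  have hnE : ‖E‖ = 1 := by
    rw [hEdef, Complex.norm_exp]
    simp
  have hnc : ‖c‖ = s := by
    rw [hcdef, Complex.norm_real, Real.norm_eq_abs, abs_of_pos hs0]
  set g : ℂ := ∑' j : ℕ, f j / c ^ j with hgdef
  set gN : ℂ := ∑ j ∈ Finset.range n, f j / c ^ j with hgNdef
  set T1 : ℂ := ∑' j : ℕ, f (j + n) / c ^ j with hT1def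
  set T2 : ℂ := ∑' j : ℕ, f (j + (n+1)) / c ^ j with hT2def
  have hg : g = gN + T1 / c ^ n := by
    have hsum : Summable (fun j : ℕ => f (j + n) / c ^ (j + n)) := by
      apply Summable.congr (hSn.div_const (c ^ n))
      intro j
      rw [pow_add]
      field_simp
      try ring
    have h := Summable.sum_add_tsum_nat_add' (f := fun j : ℕ => f j / c ^ j) (k := n) hsum
    rw [hgdef, hgNdef, hT1def, ← h]
    congr 1
    rw [eq_comm, div_eq_iff (pow_ne_zero n hc), ← tsum_mul_right]
    apply tsum_congr
    intro j
    show f (j + n) / c ^ j = f (j + n) / c ^ (j + n) * c ^ n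
    rw [pow_add]
    field_simp
  have hT1 : T1 = f n + T2 / c := by
    have hsum : Summable (fun j : ℕ => f (j + 1 + n) / c ^ (j + 1)) := by
      apply Summable.congr (hSn1.div_const c)
      intro j
      have hj : j + (n + 1) = j + 1 + n := by omega
      rw [hj, pow_succ]
      field_simp
      try ring
    have h := Summable.sum_add_tsum_nat_add' (f := fun j : ℕ => f (j + n) / c ^ j) (k := 1) hsum
    rw [hT1def, ← h]
    simp only [Finset.range_one, Finset.sum_singleton, pow_zero, zero_add]
    rw [div_one]
    congr 1
    rw [hT2def, eq_comm, div_eq_iff hc, ← tsum_mul_right]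
    apply tsum_congr
    intro j
    show f (j + (n+1)) / c ^ j = f (j + 1 + n) / c ^ (j + 1) * c
    have hj : j + (n + 1) = j + 1 + n := by omega
    rw [hj, pow_succ]
    field_simp
  have hsq : ∀ z : ℂ, ((‖u + z‖^2 : ℝ) : ℂ)
      = 1 + ((‖z‖^2 : ℝ) : ℂ) + ((starRingEnd ℂ) u * z + u * (starRingEnd ℂ) z) := by
    have h1 : ∀ y : ℂ, ((‖y‖^2 : ℝ) : ℂ) = y * (starRingEnd ℂ) y := by
      intro y
      rw [Complex.mul_conj]
      norm_cast
      rw [Complex.normSq_eq_norm_sq]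
    intro z
    have hu1 : u * (starRingEnd ℂ) u = 1 := by
      rw [← h1, hnu]; norm_num
    rw [h1, h1, map_add]
    linear_combination hu1
  have h1 := hψ₁ s hsr
  have h2 := hψ₁ₙ s
  rw [← hcdef, ← hEdef, ← hgdef] at h1
  rw [← hcdef, ← hEdef, ← hgNdef] at h2
  -- key identity
  have key : bₙ s - (w * f n + (starRingEnd ℂ) w * (starRingEnd ℂ) (f n)) =
      c^(n+1) * ((‖ψ₁ s‖^2 - ‖ψ₁ₙ s‖^2 : ℝ) : ℂ)
        + (w * T2 + (starRingEnd ℂ) (w * T2)) / c := by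
    have q1 : (starRingEnd ℂ) u * ψ₁ s = w * g / c := by
      rw [h1, hE, hcu]; field_simp
    have q2 : (starRingEnd ℂ) u * ψ₁ₙ s = w * gN / c := by
      rw [h2, hE, hcu]; field_simp
    have q1' : u * (starRingEnd ℂ) (ψ₁ s) = (starRingEnd ℂ) (w * g / c) := by
      rw [← q1, map_mul, Complex.conj_conj]
    have q2' : u * (starRingEnd ℂ) (ψ₁ₙ s) = (starRingEnd ℂ) (w * gN / c) := by
      rw [← q2, map_mul, Complex.conj_conj]
    rw [hbₙ s, ha s, haₙ s, ← hcdef, ← hudef, Complex.ofReal_sub]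
    rw [hsq (ψ₁ s), hsq (ψ₁ₙ s), q1, q2, q1', q2', hg, hT1]
    simp only [map_mul, map_add, map_div₀, map_pow, hconjc]
    field_simp
    ring
  have hψn1 : ‖ψ₁ s‖ = ‖g‖ / s := by
    rw [h1, norm_mul, norm_div, hnE, hnc, one_div, div_eq_inv_mul]
  have hψn2 : ‖ψ₁ₙ s‖ = ‖gN‖ / s := by
    rw [h2, norm_mul, norm_div, hnE, hnc, one_div, div_eq_inv_mul]
  have hg_le : ‖g‖ ≤ 2 * C * ρ := by
    have he : (fun j : ℕ => f (j + 0) / c ^ j) = fun j : ℕ => f j / c ^ j := by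
      funext j; norm_num
    rw [hgdef]
    calc ‖∑' j : ℕ, f j / c ^ j‖ = ‖∑' j : ℕ, f (j + 0) / c ^ j‖ := by rw [he]
      _ ≤ 2 * C * ρ ^ (0 + 1) := hB0
      _ = 2 * C * ρ := by norm_num
  have hgN_le : ‖gN‖ ≤ 2 * C * ρ := by
    rw [hgNdef]
    calc ‖∑ j ∈ Finset.range n, f j / c ^ j‖ ≤ ∑ j ∈ Finset.range n, ‖f j / c ^ j‖ :=
          norm_sum_le _ _
      _ ≤ ∑ j ∈ Finset.range n, C * ρ * (1/2 : ℝ) ^ j := by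
          apply Finset.sum_le_sum
          intro j _
          rw [hcdef, norm_div, norm_pow, Complex.norm_real, Real.norm_eq_abs, abs_of_pos hs0]
          have hb := hbound j
          have hq : (ρ / s) ^ j ≤ (1/2) ^ j := by
            apply pow_le_pow_left₀ (by positivity)
            rw [div_le_div_iff₀ hs0 (by norm_num)]; linarith
          have h3 : C * ρ ^ (j + 1) / s ^ j = C * ρ * (ρ / s) ^ j := by
            rw [div_pow]; field_simp; ring
          calc ‖f j‖ / s ^ j ≤ C * ρ ^ (j+1) / s ^ j := by gcongr
            _ = C * ρ * (ρ / s) ^ j := h3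
            _ ≤ C * ρ * (1/2) ^ j := by
                apply mul_le_mul_of_nonneg_left hq (by positivity)
      _ ≤ C * ρ * 2 := by
          have hgeo : HasSum (fun j : ℕ => C * ρ * (1/2 : ℝ) ^ j) (C * ρ * 2) := by
            have := (hasSum_geometric_of_lt_one (by norm_num : (0:ℝ) ≤ 1/2)
              (by norm_num)).mul_left (C * ρ)
            norm_num at this ⊢
            convert this using 2
          exact sum_le_hasSum _ (fun j _ => by positivity) hgeo
      _ = 2 * C * ρ := by ring
  have hdiff_le : ‖g - gN‖ ≤ 2 * C * ρ ^ (n+1) / s ^ n := by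
    have hgg : g - gN = T1 / c ^ n := by rw [hg]; ring
    rw [hgg, norm_div, norm_pow, hnc]
    gcongr
  have habs : |‖ψ₁ s‖^2 - ‖ψ₁ₙ s‖^2| ≤ (2 * C * ρ^(n+1) / s^n) * (4*C*ρ) / s^2 := by
    rw [hψn1, hψn2, div_pow, div_pow, div_sub_div_same, abs_div,
      abs_of_pos (by positivity : (0:ℝ) < s^2)]
    gcongr ?_ / _
    have h4 : |‖g‖ - ‖gN‖| ≤ ‖g - gN‖ := abs_norm_sub_norm_le g gN
    have h5 : |‖g‖^2 - ‖gN‖^2| = |‖g‖ - ‖gN‖| * (‖g‖ + ‖gN‖) := by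
      rw [← abs_of_nonneg (add_nonneg (norm_nonneg g) (norm_nonneg gN)), ← abs_mul]
      congr 1; ring
    rw [h5]
    have h6 : ‖g‖ + ‖gN‖ ≤ 4 * C * ρ := by linarith
    apply mul_le_mul (h4.trans hdiff_le) h6 (by positivity) (by positivity)
  -- final bound
  rw [hcw, key]
  have hT2_le : ‖T2‖ ≤ 2 * C * ρ ^ (n+2) := by
    calc ‖T2‖ ≤ 2 * C * ρ ^ ((n+1) + 1) := hBn1
      _ = 2 * C * ρ ^ (n+2) := by ring_nf
  have hnorm1 : ‖c^(n+1) * ((‖ψ₁ s‖^2 - ‖ψ₁ₙ s‖^2 : ℝ) : ℂ)‖ ≤ 8*C^2*ρ^(n+2) / s := by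
    rw [norm_mul, norm_pow, hnc, Complex.norm_real, Real.norm_eq_abs]
    have := mul_le_mul_of_nonneg_left habs (by positivity : (0:ℝ) ≤ s^(n+1))
    refine this.trans (le_of_eq ?_)
    field_simp
    ring
  have hnorm2 : ‖(w * T2 + (starRingEnd ℂ) (w * T2)) / c‖ ≤ 4*C*ρ^(n+2) / s := by
    rw [norm_div, hnc]
    gcongr
    calc ‖w * T2 + (starRingEnd ℂ) (w * T2)‖ ≤ ‖w * T2‖ + ‖(starRingEnd ℂ) (w * T2)‖ :=
          norm_add_le _ _
      _ = 2 * ‖T2‖ := by rw [RCLike.norm_conj, norm_mul, hnw, one_mul]; ring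
      _ ≤ 2 * (2 * C * ρ ^ (n+2)) := by linarith
      _ = 4*C*ρ^(n+2) := by ring
  have hinv : ‖s⁻¹‖ = 1 / s := by
    rw [Real.norm_eq_abs, abs_of_pos (inv_pos.mpr hs0), one_div]
  calc ‖c^(n+1) * ((‖ψ₁ s‖^2 - ‖ψ₁ₙ s‖^2 : ℝ) : ℂ)
        + (w * T2 + (starRingEnd ℂ) (w * T2)) / c‖
      ≤ 8*C^2*ρ^(n+2) / s + 4*C*ρ^(n+2) / s := by
        refine (norm_add_le _ _).trans ?_
        exact add_le_add hnorm1 hnorm2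
    _ = (8*C^2*ρ^(n+2) + 4*C*ρ^(n+2)) * ‖s⁻¹‖ := by
        rw [hinv]
        field_simp
end

section
/- Let κ > 0, k ∈ ℝ³ with |k| = κ, θ ∈ 𝕊² with θ ≠ k/|k|, and suppose |f_j| ≤ C ρ^j with ρ < r. With b_n as in formula (A.3) (restricted to the ray s ↦ sθ), and τ > 0 chosen with D = 2i sin(τ(k·θ - κ)) ≠ 0, one has f_{n+1} = lim_{s→+∞} D^{-1} ( e^{i((s+τ)k·θ - κ(s+τ))} b_n(s) - e^{i(s k·θ - κ s)} b_n(s+τ) ). -/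
open scoped InnerProductSpace
open Asymptotics Filter

noncomputable def cexpI (x : ℝ) : ℂ := Complex.exp (Complex.I * x)

lemma cexpI_merge (x y : ℝ) : cexpI x * cexpI y = cexpI (x + y) := by
  unfold cexpI; rw [← Complex.exp_add]; push_cast; ring_nf

lemma conj_cexpI (x : ℝ) : (starRingEnd ℂ) (cexpI x) = cexpI (-x) := by
  unfold cexpI; rw [← Complex.exp_conj]; push_cast; simp [map_mul, Complex.conj_I]

lemma norm_cexpI (x : ℝ) : ‖cexpI x‖ = 1 := by
  unfold cexpI; rw [Complex.norm_exp]; simp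

lemma cexpI_sub_neg (x : ℝ) : cexpI x - cexpI (-x) = 2 * Complex.I * (Real.sin x : ℂ) := by
  unfold cexpI
  rw [mul_comm Complex.I ((x:ℝ):ℂ),
    show Complex.I * ((-x:ℝ):ℂ) = ((-x:ℝ):ℂ) * Complex.I from mul_comm _ _,
    Complex.exp_mul_I, Complex.exp_mul_I]
  push_cast
  rw [Complex.cos_neg, Complex.sin_neg, ← Complex.ofReal_sin]
  ring

lemma aux_normsq (z : ℂ) : ((‖z‖^2 : ℝ) : ℂ) = z * (starRingEnd ℂ) z := by
  rw [Complex.mul_conj]; norm_cast; rw [Complex.normSq_eq_norm_sq]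

lemma cexpI_eta (x y : ℝ) : Complex.exp (Complex.I * x * y) = cexpI (x * y) := by
  unfold cexpI; push_cast; rw [mul_assoc]

lemma tendsto_cexpI_mul_zero {h : ℝ → ℂ} {g : ℝ → ℝ}
    (hh : Filter.Tendsto h atTop (nhds 0)) :
    Filter.Tendsto (fun s => cexpI (g s) * h s) atTop (nhds 0) := by
  refine squeeze_zero_norm (fun s => ?_) (tendsto_zero_iff_norm_tendsto_zero.mp hh)
  rw [norm_mul, norm_cexpI, one_mul]

set_option maxHeartbeats 1600000 in
/-- With the notation of formula (A.3) restricted to the ray `s ↦ sθ`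
(`ψ₁ s = (e^{iκs}/s) ∑_{j≥1} f_j s^{-(j-1)}`, `a s = s(|e^{is k·θ} + ψ₁ s|² - 1)`,
`a_n` the analogous quantity for the `n`-term truncation, `b_n s = s^n (a s - a_n s)`),
if `θ ≠ k/|k|` and `τ > 0` with `D = 2i sin (τ(k·θ - κ)) ≠ 0`, then
`f_{n+1} = lim_{s→∞} D⁻¹ (e^{i((s+τ)k·θ - κ(s+τ))} b_n s - e^{i(s k·θ - κ s)} b_n (s+τ))`.
(Here `f j` denotes the mathematical coefficient `f_{j+1}`, so `f_{n+1} = f n`.) -/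
theorem stmt8 (κ r ρ C : ℝ) (hκ : 0 < κ) (hρ : 0 < ρ) (hρr : ρ < r)
    (k θ : EuclideanSpace ℝ (Fin 3)) (hk : ‖k‖ = κ) (hθ : ‖θ‖ = 1)
    (hne : θ ≠ ‖k‖⁻¹ • k)
    (n : ℕ) (hn : 1 ≤ n)
    (f : ℕ → ℂ) (hbound : ∀ j : ℕ, ‖f j‖ ≤ C * ρ ^ (j + 1))
    (ψ₁ ψ₁ₙ : ℝ → ℂ)
    (hψ₁ : ∀ s : ℝ, r < s → ψ₁ s =
      (Complex.exp (Complex.I * (κ : ℂ) * (s : ℂ)) / (s : ℂ)) * ∑' j : ℕ, f j / (s : ℂ) ^ j)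
    (hψ₁ₙ : ∀ s : ℝ, ψ₁ₙ s =
      (Complex.exp (Complex.I * (κ : ℂ) * (s : ℂ)) / (s : ℂ)) *
        ∑ j ∈ Finset.range n, f j / (s : ℂ) ^ j)
    (a aₙ bₙ : ℝ → ℂ)
    (ha : ∀ s : ℝ, a s = (s : ℂ) *
      (((‖Complex.exp (Complex.I * ((s * (inner ℝ k θ : ℝ) : ℝ) : ℂ)) + ψ₁ s‖ ^ 2 : ℝ) : ℂ) - 1))
    (haₙ : ∀ s : ℝ, aₙ s = (s : ℂ) *
      (((‖Complex.exp (Complex.I * ((s * (inner ℝ k θ : ℝ) : ℝ) : ℂ)) + ψ₁ₙ s‖ ^ 2 : ℝ) : ℂ) - 1))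
    (hbₙ : ∀ s : ℝ, bₙ s = (s : ℂ) ^ n * (a s - aₙ s))
    (τ : ℝ) (hτ : 0 < τ) (hsin : Real.sin (τ * ((inner ℝ k θ : ℝ) - κ)) ≠ 0) :
    Filter.Tendsto (fun s : ℝ =>
      (2 * Complex.I * ((Real.sin (τ * ((inner ℝ k θ : ℝ) - κ)) : ℝ) : ℂ))⁻¹ *
        (Complex.exp (Complex.I * (((s + τ) * (inner ℝ k θ : ℝ) - κ * (s + τ) : ℝ) : ℂ)) * bₙ s
          - Complex.exp (Complex.I * ((s * (inner ℝ k θ : ℝ) - κ * s : ℝ) : ℂ)) * bₙ (s + τ)))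
      atTop (nhds (f n)) := by
  set c : ℝ := (inner ℝ k θ : ℝ) with hc
  have hr : 0 < r := hρ.trans hρr
  have hC : 0 ≤ C := by
    have h1 : 0 ≤ C * ρ := by
      have := (norm_nonneg (f 0)).trans (hbound 0); simpa using this
    nlinarith [hρ]
  have hsum : ∀ s : ℝ, r < s → ∀ m : ℕ, Summable (fun j : ℕ => f (j + m) / (s : ℂ) ^ j) := by
    intro s hs m
    have hs0 : (0:ℝ) < s := hr.trans hs
    refine Summable.of_norm_bounded (g := fun j => (C * ρ ^ (m+1)) * (ρ / s) ^ j)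
      (((summable_geometric_of_lt_one (by positivity)
        (by rw [div_lt_one hs0]; linarith)).mul_left _)) (fun j => ?_)
    rw [norm_div, norm_pow, Complex.norm_real, Real.norm_eq_abs, abs_of_pos hs0]
    calc ‖f (j+m)‖ / s ^ j ≤ (C * ρ ^ (j+m+1)) / s ^ j := by
          gcongr; exact hbound _
      _ = (C * ρ ^ (m+1)) * (ρ / s) ^ j := by
          rw [div_pow, ← mul_div_assoc]; congr 1; ring
  set G : ℝ → ℂ := fun s => ∑' j : ℕ, f (j + n) / (s : ℂ) ^ j with hG
  have htsum : ∀ m : ℕ, Filter.Tendsto (fun s : ℝ => ∑' j : ℕ, f (j + m) / (s : ℂ) ^ j)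
      atTop (nhds (f m)) := by
    intro m
    have hval : ∑' j : ℕ, (if j = 0 then f m else 0) = f m := tsum_ite_eq 0 (fun _ => f m)
    rw [← hval]
    refine tendsto_tsum_of_dominated_convergence
      (bound := fun j => (C * ρ ^ (m+1)) * (ρ / r) ^ j)
      (((summable_geometric_of_lt_one (by positivity)
        (by rw [div_lt_one hr]; exact hρr)).mul_left _)) (fun j => ?_) ?_
    · rcases Nat.eq_zero_or_pos j with hj | hj
      · subst hj; simpa using tendsto_const_nhds
      · simp only [Nat.pos_iff_ne_zero.mp hj, if_neg (Nat.pos_iff_ne_zero.mp hj)]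
        have hinv : Filter.Tendsto (fun s : ℝ => ((s : ℂ))⁻¹) atTop (nhds 0) := by
          have h0 : Filter.Tendsto (fun s : ℝ => s⁻¹) atTop (nhds (0:ℝ)) :=
            tendsto_inv_atTop_zero
          have := (Complex.continuous_ofReal.tendsto (0:ℝ)).comp h0
          simpa [Function.comp_def, Complex.ofReal_inv] using this
        have hpow := hinv.pow j
        rw [zero_pow (Nat.pos_iff_ne_zero.mp hj)] at hpow
        have := hpow.const_mul (f (j + m))
        rw [mul_zero] at this
        refine this.congr (fun s => ?_)
        rw [div_eq_mul_inv, inv_pow]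
    · filter_upwards [eventually_ge_atTop r] with s hs j
      have hs0 : (0:ℝ) < s := lt_of_lt_of_le hr hs
      rw [norm_div, norm_pow, Complex.norm_real, Real.norm_eq_abs, abs_of_pos hs0]
      calc ‖f (j+m)‖ / s ^ j ≤ (C * ρ ^ (j+m+1)) / s ^ j := by
            gcongr; exact hbound _
        _ ≤ (C * ρ ^ (j+m+1)) / r ^ j := by
            gcongr
        _ = (C * ρ ^ (m+1)) * (ρ / r) ^ j := by
          rw [div_pow, ← mul_div_assoc]; congr 1; ring
  have hGlim : Filter.Tendsto G atTop (nhds (f n)) := htsum n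
  have hshift : Filter.Tendsto (fun s : ℝ => s + τ) atTop atTop :=
    tendsto_atTop_add_const_right atTop τ tendsto_id
  have hGlim' : Filter.Tendsto (fun s => G (s + τ)) atTop (nhds (f n)) := hGlim.comp hshift
  have hT0 : Filter.Tendsto (fun s : ℝ => ∑' j : ℕ, f j / (s : ℂ) ^ j) atTop (nhds (f 0)) := by
    have := htsum 0
    simpa using this
  have hψ0 : Filter.Tendsto ψ₁ atTop (nhds 0) := by
    rw [tendsto_zero_iff_norm_tendsto_zero]
    have h1 : Filter.Tendsto (fun s : ℝ => ‖∑' j : ℕ, f j / (s : ℂ) ^ j‖ * s⁻¹) atTop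
        (nhds (‖f 0‖ * 0)) := ((continuous_norm.tendsto _).comp hT0).mul tendsto_inv_atTop_zero
    rw [mul_zero] at h1
    refine h1.congr' ?_
    filter_upwards [eventually_gt_atTop r] with s hs
    have hs0 : (0:ℝ) < s := hr.trans hs
    rw [hψ₁ s hs, norm_mul, norm_div, Complex.norm_real, Real.norm_eq_abs, abs_of_pos hs0]
    rw [cexpI_eta, norm_cexpI]
    ring
  have hψₙ0 : Filter.Tendsto ψ₁ₙ atTop (nhds 0) := by
    rw [tendsto_zero_iff_norm_tendsto_zero]
    have hP : Filter.Tendsto (fun s : ℝ => ∑ j ∈ Finset.range n, f j / (s : ℂ) ^ j) atTop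
        (nhds (f 0)) := by
      have hval : ∑ j ∈ Finset.range n, (if j = 0 then f j else 0) = f 0 := by
        rw [Finset.sum_ite_eq' (Finset.range n) 0 f,
          if_pos (Finset.mem_range.mpr (by omega))]
      rw [← hval]
      refine tendsto_finset_sum _ (fun j _ => ?_)
      rcases Nat.eq_zero_or_pos j with hj | hj
      · subst hj; simpa using tendsto_const_nhds
      · simp only [Nat.pos_iff_ne_zero.mp hj, if_neg (Nat.pos_iff_ne_zero.mp hj)]
        have hinv : Filter.Tendsto (fun s : ℝ => ((s : ℂ))⁻¹) atTop (nhds 0) := by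
          have h0 : Filter.Tendsto (fun s : ℝ => s⁻¹) atTop (nhds (0:ℝ)) :=
            tendsto_inv_atTop_zero
          have := (Complex.continuous_ofReal.tendsto (0:ℝ)).comp h0
          simpa [Function.comp_def, Complex.ofReal_inv] using this
        have hpow := hinv.pow j
        rw [zero_pow (Nat.pos_iff_ne_zero.mp hj)] at hpow
        have := hpow.const_mul (f j)
        rw [mul_zero] at this
        refine this.congr (fun s => ?_)
        rw [div_eq_mul_inv, inv_pow]
    have h1 : Filter.Tendsto
        (fun s : ℝ => ‖∑ j ∈ Finset.range n, f j / (s : ℂ) ^ j‖ * s⁻¹) atTop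
        (nhds (‖f 0‖ * 0)) := ((continuous_norm.tendsto _).comp hP).mul tendsto_inv_atTop_zero
    rw [mul_zero] at h1
    refine h1.congr' ?_
    filter_upwards [eventually_gt_atTop r] with s hs
    have hs0 : (0:ℝ) < s := hr.trans hs
    rw [hψ₁ₙ s, norm_mul, norm_div, Complex.norm_real, Real.norm_eq_abs, abs_of_pos hs0]
    rw [cexpI_eta, norm_cexpI]
    ring
  have hGc : Filter.Tendsto (fun s => (starRingEnd ℂ) (G s)) atTop
      (nhds ((starRingEnd ℂ) (f n))) := (Complex.continuous_conj.tendsto _).comp hGlim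
  have hGc' : Filter.Tendsto (fun s => (starRingEnd ℂ) (G (s + τ))) atTop
      (nhds ((starRingEnd ℂ) (f n))) := (Complex.continuous_conj.tendsto _).comp hGlim'
  have hψc : Filter.Tendsto (fun s => (starRingEnd ℂ) (ψ₁ s)) atTop (nhds 0) := by
    have := (Complex.continuous_conj.tendsto (0:ℂ)).comp hψ0
    simpa [Function.comp_def] using this
  have hψc' : Filter.Tendsto (fun s => (starRingEnd ℂ) (ψ₁ (s + τ))) atTop (nhds 0) :=
    hψc.comp hshift
  have hψₙ0' : Filter.Tendsto (fun s => ψ₁ₙ (s + τ)) atTop (nhds 0) := hψₙ0.comp hshift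
  have hb : ∀ s : ℝ, r < s → bₙ s =
      cexpI (κ*s - s*c) * G s + cexpI (s*c - κ*s) * (starRingEnd ℂ) (G s)
      + cexpI (κ*s) * (G s * (starRingEnd ℂ) (ψ₁ s))
      + cexpI (-(κ*s)) * ((starRingEnd ℂ) (G s) * ψ₁ₙ s) := by
    intro s hs
    have hs0 : (0:ℝ) < s := hr.trans hs
    have hsC : (s:ℂ) ≠ 0 := by exact_mod_cast hs0.ne'
    have hGsplit : (∑' j : ℕ, f j / (s:ℂ)^j) =
        (∑ j ∈ Finset.range n, f j / (s:ℂ)^j) + G s / (s:ℂ)^n := by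
      have h0 : Summable (fun j : ℕ => f j / (s:ℂ)^j) := by
        have := hsum s hs 0; simpa using this
      rw [← Summable.sum_add_tsum_nat_add n h0]
      congr 1
      rw [hG, ← tsum_div_const]
      exact tsum_congr fun j => by rw [pow_add, div_div]
    have hδ : ψ₁ s = ψ₁ₙ s + cexpI (κ*s) * G s / (s:ℂ)^(n+1) := by
      rw [hψ₁ s hs, hψ₁ₙ s, hGsplit, cexpI_eta]
      field_simp
      ring
    have hδc : (starRingEnd ℂ) (ψ₁ s) = (starRingEnd ℂ) (ψ₁ₙ s)
        + cexpI (-(κ*s)) * (starRingEnd ℂ) (G s) / (s:ℂ)^(n+1) := by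
      rw [hδ]
      simp only [map_add, map_div₀, map_mul, map_pow, Complex.conj_ofReal, conj_cexpI]
    rw [hbₙ, ha, haₙ, aux_normsq, aux_normsq]
    simp only [map_add]
    rw [show Complex.exp (Complex.I * ((s*c : ℝ) : ℂ)) = cexpI (s*c) from rfl]
    simp only [conj_cexpI]
    rw [hδc, hδ,
      show cexpI (κ*s - s*c) = cexpI (κ*s) * cexpI (-(s*c)) by
        rw [show κ*s - s*c = κ*s + -(s*c) from by ring, ← cexpI_merge],
      show cexpI (s*c - κ*s) = cexpI (s*c) * cexpI (-(κ*s)) by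
        rw [show s*c - κ*s = s*c + -(κ*s) from by ring, ← cexpI_merge]]
    field_simp
    ring
  have key : (fun s : ℝ =>
      Complex.exp (Complex.I * (((s + τ) * c - κ * (s + τ) : ℝ) : ℂ)) * bₙ s
        - Complex.exp (Complex.I * ((s * c - κ * s : ℝ) : ℂ)) * bₙ (s + τ))
      =ᶠ[Filter.atTop] (fun s : ℝ =>
      (cexpI (τ*(c-κ)) * G s - cexpI (-(τ*(c-κ))) * G (s+τ))
        + cexpI ((c-κ)*(2*s+τ)) * ((starRingEnd ℂ) (G s) - (starRingEnd ℂ) (G (s+τ)))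
        + cexpI ((s+τ)*c - κ*(s+τ) + κ*s) * (G s * (starRingEnd ℂ) (ψ₁ s))
        + cexpI ((s+τ)*c - κ*(s+τ) + -(κ*s)) * ((starRingEnd ℂ) (G s) * ψ₁ₙ s)
        - cexpI (s*c - κ*s + κ*(s+τ)) * (G (s+τ) * (starRingEnd ℂ) (ψ₁ (s+τ)))
        - cexpI (s*c - κ*s + -(κ*(s+τ))) * ((starRingEnd ℂ) (G (s+τ)) * ψ₁ₙ (s+τ))) := by
    filter_upwards [eventually_gt_atTop r] with s hs
    have hs' : r < s + τ := by linarith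
    rw [show Complex.exp (Complex.I * (((s + τ) * c - κ * (s + τ) : ℝ) : ℂ))
        = cexpI ((s + τ) * c - κ * (s + τ)) from rfl,
      show Complex.exp (Complex.I * ((s * c - κ * s : ℝ) : ℂ)) = cexpI (s * c - κ * s) from rfl,
      hb s hs, hb (s+τ) hs']
    simp only [mul_add, mul_sub, sub_mul, ← mul_assoc, cexpI_merge]
    ring_nf
  have T1 : Filter.Tendsto (fun s : ℝ =>
      cexpI (τ*(c-κ)) * G s - cexpI (-(τ*(c-κ))) * G (s+τ)) atTop
      (nhds (cexpI (τ*(c-κ)) * f n - cexpI (-(τ*(c-κ))) * f n)) :=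
    (hGlim.const_mul _).sub (hGlim'.const_mul _)
  have T2 : Filter.Tendsto (fun s : ℝ =>
      cexpI ((c-κ)*(2*s+τ)) * ((starRingEnd ℂ) (G s) - (starRingEnd ℂ) (G (s+τ)))) atTop
      (nhds 0) := by
    refine tendsto_cexpI_mul_zero ?_
    have := hGc.sub hGc'; simpa using this
  have T3 : Filter.Tendsto (fun s : ℝ =>
      cexpI ((s+τ)*c - κ*(s+τ) + κ*s) * (G s * (starRingEnd ℂ) (ψ₁ s))) atTop (nhds 0) := by
    refine tendsto_cexpI_mul_zero ?_
    have := hGlim.mul hψc; simpa using this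
  have T4 : Filter.Tendsto (fun s : ℝ =>
      cexpI ((s+τ)*c - κ*(s+τ) + -(κ*s)) * ((starRingEnd ℂ) (G s) * ψ₁ₙ s)) atTop (nhds 0) := by
    refine tendsto_cexpI_mul_zero ?_
    have := hGc.mul hψₙ0; simpa using this
  have T5 : Filter.Tendsto (fun s : ℝ =>
      cexpI (s*c - κ*s + κ*(s+τ)) * (G (s+τ) * (starRingEnd ℂ) (ψ₁ (s+τ)))) atTop (nhds 0) := by
    refine tendsto_cexpI_mul_zero ?_
    have := hGlim'.mul hψc'; simpa using this
  have T6 : Filter.Tendsto (fun s : ℝ =>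
      cexpI (s*c - κ*s + -(κ*(s+τ))) * ((starRingEnd ℂ) (G (s+τ)) * ψ₁ₙ (s+τ))) atTop
      (nhds 0) := by
    refine tendsto_cexpI_mul_zero ?_
    have := hGc'.mul hψₙ0'; simpa using this
  have hRHS := ((((T1.add T2).add T3).add T4).sub T5).sub T6
  simp only [add_zero, sub_zero] at hRHS
  have hval : cexpI (τ*(c-κ)) * f n - cexpI (-(τ*(c-κ))) * f n
      = (2 * Complex.I * ((Real.sin (τ * (c - κ)) : ℝ) : ℂ)) * f n := by
    rw [show cexpI (τ*(c-κ)) * f n - cexpI (-(τ*(c-κ))) * f n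
        = (cexpI (τ*(c-κ)) - cexpI (-(τ*(c-κ)))) * f n by ring, cexpI_sub_neg]
  rw [hval] at hRHS
  have Hstuff : Filter.Tendsto (fun s : ℝ =>
      Complex.exp (Complex.I * (((s + τ) * c - κ * (s + τ) : ℝ) : ℂ)) * bₙ s
        - Complex.exp (Complex.I * ((s * c - κ * s : ℝ) : ℂ)) * bₙ (s + τ))
      atTop (nhds ((2 * Complex.I * ((Real.sin (τ * (c - κ)) : ℝ) : ℂ)) * f n)) :=
    Filter.Tendsto.congr' key.symm hRHS
  have hD : (2 * Complex.I * ((Real.sin (τ * (c - κ)) : ℝ) : ℂ)) ≠ 0 :=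
    mul_ne_zero (mul_ne_zero two_ne_zero Complex.I_ne_zero)
      (Complex.ofReal_ne_zero.mpr hsin)
  have hfin := Hstuff.const_mul ((2 * Complex.I * ((Real.sin (τ * (c - κ)) : ℝ) : ℂ))⁻¹)
  rw [inv_mul_cancel_left₀ hD] at hfin
  exact hfin
end
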